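/- arXiv:1805.02048 — 4 statements merged into one kernel-verified Lean document; each statement's English description precedes it below -/
import Mathlib

section
/- A bipartite biregular pair P = (a^p | b^q) with 1 ≤ a ≤ b, p, q ≥ 1 is Eulerian if and only if P has one of the following forms: (1^{bq} | b^q); (2^{br} | b^{2r}) with r ≥ 1; (2^{qr} | (2r)^q) with q ≥ 3 odd; (3^p | 3^p) with p ≥ 4; (3^{4r} | 4^{3r}) with r ≥ 2; or (3^{5r} | 5^{3r}) with r ≥ 4. -/
/-- The bipartite biregular pair `(a^p | b^q)` is Eulerian: `ap = bq`, `q ≥ a` and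
Euler's inequality `m ≤ 2(p+q) - 4` holds, where `m = ap = bq` and `p + q ≥ 3`. -/
def EulerianPair (a p b q : ℕ) : Prop :=
  a * p = b * q ∧ a ≤ q ∧ (3 ≤ p + q → a * p ≤ 2 * (p + q) - 4)

theorem eulerian_pair_classification (a b p q : ℕ) (ha : 1 ≤ a) (hab : a ≤ b)
    (hp : 1 ≤ p) (hq : 1 ≤ q) :
    EulerianPair a p b q ↔
      (a = 1 ∧ p = b * q) ∨
      (∃ r, 1 ≤ r ∧ a = 2 ∧ p = b * r ∧ q = 2 * r) ∨
      (∃ r, a = 2 ∧ b = 2 * r ∧ p = q * r ∧ 3 ≤ q ∧ Odd q) ∨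
      (a = 3 ∧ b = 3 ∧ p = q ∧ 4 ≤ p) ∨
      (∃ r, 2 ≤ r ∧ a = 3 ∧ b = 4 ∧ p = 4 * r ∧ q = 3 * r) ∨
      (∃ r, 4 ≤ r ∧ a = 3 ∧ b = 5 ∧ p = 5 * r ∧ q = 3 * r) := by
  constructor
  · rintro ⟨h1, h2, h3⟩
    rcases Nat.lt_or_ge a 3 with ha3 | ha3
    · -- a = 1 or a = 2
      interval_cases a
      · -- a = 1
        exact Or.inl ⟨rfl, by simpa using h1⟩
      · -- a = 2
        rcases Nat.even_or_odd q with he | ho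
        · obtain ⟨r, hr⟩ := he
          have hq2 : q = 2 * r := by omega
          have h2p : 2 * p = 2 * (b * r) := by rw [h1, hq2]; ring
          have hpbr : p = b * r := Nat.eq_of_mul_eq_mul_left (by norm_num) h2p
          exact Or.inr (Or.inl ⟨r, by omega, rfl, hpbr, hq2⟩)
        · have hd : 2 ∣ b * q := ⟨p, h1.symm⟩
          rcases (Nat.Prime.dvd_mul Nat.prime_two).mp hd with hb | hqd
          · obtain ⟨r, hr⟩ := hb
            have h2p : 2 * p = 2 * (q * r) := by rw [h1, hr]; ring
            have hpqr : p = q * r := Nat.eq_of_mul_eq_mul_left (by norm_num) h2p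
            have hq3 : 3 ≤ q := by obtain ⟨k, hk⟩ := ho; omega
            exact Or.inr (Or.inr (Or.inl ⟨r, rfl, hr, hpqr, hq3, ho⟩))
          · obtain ⟨k, hk⟩ := ho
            omega
    · -- a ≥ 3
      have hq3 : 3 ≤ q := le_trans ha3 h2
      have hpq3 : 3 ≤ p + q := by omega
      have h3' := h3 hpq3
      have h8 : 4 ≤ 2 * (p + q) := by omega
      have hap : a * p + 4 ≤ 2 * (p + q) := (Nat.le_sub_iff_add_le h8).mp h3'
      have hbq : b * q + 4 ≤ 2 * (p + q) := by rw [← h1]; exact hap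
      have h3p : 3 * p ≤ a * p := Nat.mul_le_mul_right p ha3
      have hb3 : 3 ≤ b := le_trans ha3 hab
      have h3q : 3 * q ≤ b * q := Nat.mul_le_mul_right q hb3
      have hp2q : p + 4 ≤ 2 * q := by linarith
      have hq2p : q + 4 ≤ 2 * p := by linarith
      have hb5 : b ≤ 5 := by
        by_contra hc
        push_neg at hc
        have h6q : 6 * q ≤ b * q := Nat.mul_le_mul_right q (by omega)
        linarith
      have ha5 : a ≤ 5 := le_trans hab hb5
      interval_cases a <;> interval_cases b
      · -- (3,3)
        exact Or.inr (Or.inr (Or.inr (Or.inl ⟨rfl, rfl, by omega, by omega⟩)))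
      · -- (3,4)
        have hd : 3 ∣ q := by omega
        obtain ⟨r, hr⟩ := hd
        exact Or.inr (Or.inr (Or.inr (Or.inr (Or.inl
          ⟨r, by omega, rfl, rfl, by omega, hr⟩))))
      · -- (3,5)
        have hd : 3 ∣ q := by omega
        obtain ⟨r, hr⟩ := hd
        exact Or.inr (Or.inr (Or.inr (Or.inr (Or.inr
          ⟨r, by omega, rfl, rfl, by omega, hr⟩))))
      · exfalso; omega
      · exfalso; omega
      · exfalso; omega
  · rintro (⟨rfl, rfl⟩ | ⟨r, hr, rfl, rfl, rfl⟩ | ⟨r, rfl, rfl, rfl, hq3, ho⟩ |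
      ⟨rfl, rfl, rfl, hp4⟩ | ⟨r, hr, rfl, rfl, rfl, rfl⟩ | ⟨r, hr, rfl, rfl, rfl, rfl⟩)
    · refine ⟨by ring, hq, fun _ => ?_⟩
      have hX : 1 * q ≤ b * q := Nat.mul_le_mul_right q hab
      apply Nat.le_sub_of_add_le
      linarith
    · refine ⟨by ring, by omega, fun _ => ?_⟩
      apply Nat.le_sub_of_add_le
      nlinarith
    · refine ⟨by ring, by omega, fun _ => ?_⟩
      apply Nat.le_sub_of_add_le
      nlinarith
    · exact ⟨by omega, by omega, fun _ => by omega⟩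
    · exact ⟨by omega, by omega, fun _ => by omega⟩
    · exact ⟨by omega, by omega, fun _ => by omega⟩
end

section
/- For every odd q ≥ 3 and every r ≥ 1, there exists a simple bipartite planar graph in which one part has qr vertices all of degree 2 and the other part has q vertices all of degree 2r. -/
/-- A topological plane embedding (drawing) of a simple graph: vertices are points
of the plane, edges are injective continuous arcs meeting only at common endpoints. -/
structure PlaneEmb {V : Type} (G : SimpleGraph V) where
  pos : V → ℝ × ℝ
  pos_inj : Function.Injective pos
  arc : ∀ ⦃u v : V⦄, G.Adj u v → unitInterval → ℝ × ℝ
  arc_cont : ∀ ⦃u v : V⦄ (h : G.Adj u v), Continuous (arc h)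
  arc_inj : ∀ ⦃u v : V⦄ (h : G.Adj u v), Function.Injective (arc h)
  arc_zero : ∀ ⦃u v : V⦄ (h : G.Adj u v), arc h 0 = pos u
  arc_one : ∀ ⦃u v : V⦄ (h : G.Adj u v), arc h 1 = pos v
  arc_symm : ∀ ⦃u v : V⦄ (h : G.Adj u v) (t : unitInterval),
    arc h.symm (unitInterval.symm t) = arc h t
  arc_vertex : ∀ ⦃u v : V⦄ (h : G.Adj u v) (t : unitInterval),
    (∃ w, arc h t = pos w) → t = 0 ∨ t = 1
  arc_disj : ∀ ⦃u v x y : V⦄ (h : G.Adj u v) (h' : G.Adj x y),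
    s(u, v) ≠ s(x, y) → ∀ t₁ t₂ : unitInterval, arc h t₁ = arc h' t₂ → ∃ w, arc h t₁ = pos w

/-- The pair `(a^p | b^q)` is planar graphic: there is a simple bipartite planar graph
one of whose parts has `p` vertices, all of degree `a`, and the other part has `q`
vertices, all of degree `b`. -/
def PlanarPair (a p b q : ℕ) : Prop :=
  ∃ (V : Type) (_ : Finite V) (G : SimpleGraph V) (A B : Set V),
    Disjoint A B ∧ A ∪ B = Set.univ ∧ A.ncard = p ∧ B.ncard = q ∧
    (∀ ⦃u v⦄, G.Adj u v → ((u ∈ A ∧ v ∈ B) ∨ (u ∈ B ∧ v ∈ A))) ∧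
    (∀ v ∈ A, (G.neighborSet v).ncard = a) ∧
    (∀ v ∈ B, (G.neighborSet v).ncard = b) ∧
    Nonempty (PlaneEmb G)

/-!
Replace every edge `{i, i + 1}` of the cycle `C_q` by `r` paths of length two through new
vertices `(i, j)`; the old vertices get degree `2r`, the new ones degree `2`. Draw the old vertex
`b` at `(b, 0)`. For `i < q - 1` the paths of slot `i` are straight segments to the apexes
`(i + 1/2, j + 1)` above the axis, and the paths of the closing slot go to `((q - 1)/2, -(j + 1))`
below it. Each slot is an axis-parallel affine image of the standard lens with feet `(0, 0)`,
`(1, 0)` and apexes `(1/2, h)`, in which distinct edges meet only at endpoints; two different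
slots can only meet on the axis or on a vertical line through a foot, i.e. at an old vertex.
-/

open Set AffineMap

theorem PlaneEmb.nonempty_of_segments {V : Type} {G : SimpleGraph V} (pos : V → ℝ × ℝ)
    (pos_inj : Function.Injective pos) (exists_adj : ∀ w, ∃ x, G.Adj w x)
    (segment_inter : ∀ ⦃u v x y : V⦄, G.Adj u v → G.Adj x y → s(u, v) ≠ s(x, y) →
      segment ℝ (pos u) (pos v) ∩ segment ℝ (pos x) (pos y) ⊆ {pos u, pos v}) :
    Nonempty (PlaneEmb G) := by
  have mem_segment {u v : V} (t : unitInterval) :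
      lineMap (pos u) (pos v) (t : ℝ) ∈ segment ℝ (pos u) (pos v) :=
    lineMap_mem_segment ℝ _ _ ⟨t.2.1, t.2.2⟩
  have lineMap_inj {u v : V} (h : G.Adj u v) :
      Function.Injective (lineMap (pos u) (pos v) : ℝ → ℝ × ℝ) :=
    lineMap_injective ℝ (pos_inj.ne h.ne)
  refine ⟨{
    pos := pos
    pos_inj := pos_inj
    arc := fun u v _ t => lineMap (pos u) (pos v) (t : ℝ)
    arc_cont := fun u v _ => lineMap_continuous.comp continuous_subtype_val
    arc_inj := fun u v h t₁ t₂ ht => Subtype.ext (lineMap_inj h ht)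
    arc_zero := fun u v _ => lineMap_apply_zero _ _
    arc_one := fun u v _ => lineMap_apply_one _ _
    arc_symm := fun u v _ t => by rw [unitInterval.coe_symm_eq, lineMap_apply_one_sub]
    arc_vertex := ?_
    arc_disj := ?_ }⟩
  · rintro u v huv t ⟨w, hw⟩
    by_cases hwu : w = u
    · subst hwu
      exact Or.inl (Subtype.ext (lineMap_inj huv (hw.trans (lineMap_apply_zero _ _).symm)))
    by_cases hwv : w = v
    · subst hwv
      exact Or.inr (Subtype.ext (lineMap_inj huv (hw.trans (lineMap_apply_one _ _).symm)))
    -- `pos w` would be a common point of `uv` and an edge at `w`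
    obtain ⟨x, hwx⟩ := exists_adj w
    have hne : s(u, v) ≠ s(w, x) := by
      rw [Ne, Sym2.eq_iff]; tauto
    rcases segment_inter huv hwx hne ⟨hw ▸ mem_segment t, left_mem_segment ℝ _ _⟩ with h | h
    · exact absurd (pos_inj h) hwu
    · exact absurd (pos_inj h) hwv
  · intro u v x y huv hxy hne t₁ t₂ ht
    rcases segment_inter huv hxy hne ⟨mem_segment t₁, ht ▸ mem_segment t₂⟩ with h | h
    · exact ⟨u, h⟩
    · exact ⟨v, h⟩

def lensEdge (c h : ℝ) : Set (ℝ × ℝ) := segment ℝ (c, 0) (1 / 2, h)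

theorem mem_lensEdge {c h : ℝ} {w : ℝ × ℝ} :
    w ∈ lensEdge c h ↔ ∃ t ∈ Icc (0 : ℝ) 1, w = (c + t * (1 / 2 - c), t * h) := by
  simp only [lensEdge, segment_eq_image', mem_image, Prod.ext_iff, eq_comm (a := w.1),
    eq_comm (a := w.2)]
  simp

theorem lensEdge_subset {c h : ℝ} (hc : c = 0 ∨ c = 1) (hh : 0 ≤ h) :
    lensEdge c h ⊆ Icc 0 1 ×ˢ Ici 0 := by
  rintro w hw
  obtain ⟨t, ⟨ht₀, ht₁⟩, rfl⟩ := mem_lensEdge.1 hw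
  refine ⟨⟨?_, ?_⟩, mul_nonneg ht₀ hh⟩ <;> rcases hc with rfl | rfl <;> simp <;> linarith

theorem eq_foot_of_mem_lensEdge {c h : ℝ} {w : ℝ × ℝ} (hc : c = 0 ∨ c = 1) (hh : 0 < h)
    (hw : w ∈ lensEdge c h) (hbd : w.1 = 0 ∨ w.1 = 1 ∨ w.2 = 0) : w = (c, 0) := by
  obtain ⟨t, ⟨ht₀, ht₁⟩, rfl⟩ := mem_lensEdge.1 hw
  suffices t = 0 by simp [this]
  rcases hc with rfl | rfl <;> rcases hbd with hbd | hbd | hbd <;> dsimp only at hbd <;> nlinarith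

theorem eq_foot_or_apex_of_mem_lensEdge {c c' h h' : ℝ} {w : ℝ × ℝ} (hc : c = 0 ∨ c = 1)
    (hc' : c' = 0 ∨ c' = 1) (hne : (c, h) ≠ (c', h')) (hw : w ∈ lensEdge c h)
    (hw' : w ∈ lensEdge c' h') :
    w = (c, 0) ∨ w = (1 / 2, h) := by
  obtain ⟨t, ⟨ht₀, ht₁⟩, rfl⟩ := mem_lensEdge.1 hw
  obtain ⟨s, ⟨hs₀, hs₁⟩, hts⟩ := mem_lensEdge.1 hw'
  simp only [Prod.mk.injEq] at hts hne
  obtain ⟨hx, hy⟩ := hts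
  suffices t = 0 ∨ t = 1 by rcases this with rfl | rfl <;> simp
  rcases eq_or_ne c c' with rfl | hcc
  · have hst : t = s := by rcases hc with rfl | rfl <;> linarith
    subst hst
    have hneh : h ≠ h' := by rintro rfl; exact hne (by simp)
    left
    exact (mul_eq_zero.1 (by linear_combination hy : t * (h - h') = 0)).resolve_right
      (sub_ne_zero.2 hneh)
  · right
    rcases hc with rfl | rfl <;> rcases hc' with rfl | rfl <;>
      first | exact absurd rfl hcc | linarith

def axisMap (o a s : ℝ) : ℝ × ℝ →ᵃ[ℝ] ℝ × ℝ where
  toFun w := (o + a * w.1, s * w.2)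
  linear := (a • LinearMap.fst ℝ ℝ ℝ).prod (s • LinearMap.snd ℝ ℝ ℝ)
  map_vadd' p v := by ext <;> simp <;> ring

@[simp]
theorem axisMap_apply (o a s : ℝ) (w : ℝ × ℝ) :
    axisMap o a s w = (o + a * w.1, s * w.2) :=
  rfl

theorem axisMap_injective {o a s : ℝ} (ha : a ≠ 0) (hs : s ≠ 0) :
    Function.Injective (axisMap o a s) := by
  intro w w' h
  simp only [axisMap_apply, Prod.mk.injEq, add_right_inj, mul_right_inj' ha,
    mul_right_inj' hs] at h
  exact Prod.ext h.1 h.2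

namespace ThickCycle

def slot (n : ℕ) (i : Fin (n + 1)) : ℝ × ℝ →ᵃ[ℝ] ℝ × ℝ :=
  if i = Fin.last n then axisMap n (-n) (-1) else axisMap i 1 1

variable {n : ℕ}

theorem slot_injective (hn : 1 ≤ n) (i : Fin (n + 1)) : Function.Injective (slot n i) := by
  unfold slot
  split_ifs
  · exact axisMap_injective (by norm_cast; omega) (by norm_num)
  · exact axisMap_injective one_ne_zero one_ne_zero

theorem boundary_of_slot_eq_slot {i i' : Fin (n + 1)} (hii : i ≠ i') {w w' : ℝ × ℝ}
    (hw : w ∈ Icc 0 1 ×ˢ Ici 0) (hw' : w' ∈ Icc 0 1 ×ˢ Ici 0)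
    (h : slot n i w = slot n i' w') :
    w.1 = 0 ∨ w.1 = 1 ∨ w.2 = 0 := by
  obtain ⟨⟨hx₀, hx₁⟩, hy : 0 ≤ w.2⟩ := hw
  obtain ⟨⟨hx₀', hx₁'⟩, hy' : 0 ≤ w'.2⟩ := hw'
  unfold slot at h
  split_ifs at h with hi hi'
  · exact absurd (hi.trans hi'.symm) hii
  all_goals simp only [axisMap_apply, Prod.mk.injEq] at h
  · right; right; linarith
  · right; right; linarith
  · rcases lt_or_gt_of_ne (Fin.val_ne_of_ne hii) with hlt | hlt
    · have : (i : ℝ) + 1 ≤ i' := by exact_mod_cast hlt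
      right; left; linarith
    · have : (i' : ℝ) + 1 ≤ i := by exact_mod_cast hlt
      left; linarith

variable (n) (r : ℕ)

abbrev V := Fin (n + 1) ⊕ Fin (n + 1) × Fin r

def graph : SimpleGraph (V n r) where
  Adj u v := match u, v with
    | .inl b, .inr p => b = p.1 ∨ b = p.1 + 1
    | .inr p, .inl b => b = p.1 ∨ b = p.1 + 1
    | _, _ => False
  symm := ⟨by rintro (b | p) (b' | p') h <;> exact h⟩
  loopless := ⟨by rintro (b | p) h <;> exact h⟩

noncomputable def pos : V n r → ℝ × ℝ
  | .inl b => ((b : ℝ), 0)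
  | .inr p => slot n p.1 (1 / 2, (p.2 : ℝ) + 1)

variable {n r}

theorem slot_zero (i : Fin (n + 1)) : slot n i (0, 0) = pos n r (.inl i) := by
  unfold slot; split_ifs with hi <;> simp [pos, hi]

theorem slot_one (i : Fin (n + 1)) : slot n i (1, 0) = pos n r (.inl (i + 1)) := by
  unfold slot; split_ifs with hi <;> simp [pos, hi, Fin.val_add_one]

theorem segment_eq_image_slot {b i : Fin (n + 1)} (j : Fin r) (hb : b = i ∨ b = i + 1) :
    ∃ c : ℝ, (c = 0 ∨ c = 1) ∧ pos n r (.inl b) = slot n i (c, 0) ∧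
      segment ℝ (pos n r (.inl b)) (pos n r (.inr (i, j))) = slot n i '' lensEdge c (j + 1) := by
  rcases hb with rfl | rfl
  · exact ⟨0, .inl rfl, (slot_zero b).symm, by rw [lensEdge, image_segment, slot_zero]; rfl⟩
  · exact ⟨1, .inr rfl, (slot_one i).symm, by rw [lensEdge, image_segment, slot_one]; rfl⟩

theorem pos_injective (hn : 1 ≤ n) : Function.Injective (pos n r) := by
  have apex_mem (j : Fin r) : ((1 / 2 : ℝ), (j : ℝ) + 1) ∈ Icc (0 : ℝ) 1 ×ˢ Ici 0 :=
    ⟨⟨by norm_num, by norm_num⟩, mem_Ici.2 (by positivity)⟩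
  have apex_interior (j : Fin r) :
      ¬((1 / 2 : ℝ) = 0 ∨ (1 / 2 : ℝ) = 1 ∨ (j : ℝ) + 1 = 0) := by
    norm_num
    positivity
  have apex_ne {i i' : Fin (n + 1)} (j : Fin r) :
      slot n i (1 / 2, (j : ℝ) + 1) ≠ slot n i' (0, 0) := by
    intro h
    rcases eq_or_ne i i' with rfl | hii
    · simpa using congrArg Prod.fst (slot_injective hn i h)
    · exact apex_interior j (boundary_of_slot_eq_slot hii (apex_mem j)
        ⟨⟨le_rfl, zero_le_one⟩, mem_Ici.2 le_rfl⟩ h)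
  rintro (b | ⟨i, j⟩) (b' | ⟨i', j'⟩) h
  · simpa [pos, Fin.ext_iff] using h
  · exact absurd ((slot_zero (r := r) b).trans h).symm (apex_ne j')
  · exact absurd (h.trans (slot_zero b').symm) (apex_ne j)
  · rcases eq_or_ne i i' with rfl | hii
    · simpa [pos, (slot_injective hn i).eq_iff, Fin.ext_iff] using h
    · exact absurd (boundary_of_slot_eq_slot hii (apex_mem j) (apex_mem j') h) (apex_interior j)

theorem segment_inl_inr_inter_subset (hn : 1 ≤ n) {b b' : Fin (n + 1)}
    {p p' : Fin (n + 1) × Fin r} (hb : b = p.1 ∨ b = p.1 + 1) (hb' : b' = p'.1 ∨ b' = p'.1 + 1)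
    (hne : s(Sum.inl b, Sum.inr p) ≠ s(Sum.inl b', Sum.inr p')) :
    segment ℝ (pos n r (.inl b)) (pos n r (.inr p)) ∩
        segment ℝ (pos n r (.inl b')) (pos n r (.inr p')) ⊆
      {pos n r (.inl b), pos n r (.inr p)} := by
  obtain ⟨i, j⟩ := p
  obtain ⟨i', j'⟩ := p'
  obtain ⟨c, hc, hbase, hseg⟩ := segment_eq_image_slot j hb
  obtain ⟨c', hc', hbase', hseg'⟩ := segment_eq_image_slot j' hb'
  rintro z ⟨hz, hz'⟩
  rw [hseg] at hz
  rw [hseg'] at hz'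
  obtain ⟨w, hw, rfl⟩ := hz
  obtain ⟨w', hw', hww'⟩ := hz'
  rcases eq_or_ne i i' with rfl | hii
  · obtain rfl := slot_injective hn i hww'
    have hne' : (c, (j : ℝ) + 1) ≠ (c', (j' : ℝ) + 1) := by
      intro h
      simp only [Prod.mk.injEq, add_left_inj, Nat.cast_inj, Fin.val_inj] at h
      obtain ⟨rfl, rfl⟩ := h
      obtain rfl : b = b' := Sum.inl_injective (pos_injective hn (hbase.trans hbase'.symm))
      exact hne rfl
    rcases eq_foot_or_apex_of_mem_lensEdge hc hc' hne' hw hw' with rfl | rfl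
    · exact .inl hbase.symm
    · exact .inr rfl
  · have hboundary := boundary_of_slot_eq_slot hii (lensEdge_subset hc (by positivity) hw)
      (lensEdge_subset hc' (by positivity) hw') hww'.symm
    rw [eq_foot_of_mem_lensEdge hc (by positivity) hw hboundary]
    exact .inl hbase.symm

theorem nonempty_planeEmb (hn : 1 ≤ n) (hr : 1 ≤ r) : Nonempty (PlaneEmb (graph n r)) := by
  refine PlaneEmb.nonempty_of_segments (pos n r) (pos_injective hn) ?_ ?_
  · rintro (b | p)
    · exact ⟨.inr (b, ⟨0, hr⟩), .inl rfl⟩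
    · exact ⟨.inl p.1, .inl rfl⟩
  · rintro (b | p) (b' | p') (c | q) (c' | q') huv hxy hne <;>
      first | exact huv.elim | exact hxy.elim | skip
    · exact segment_inl_inr_inter_subset hn huv hxy hne
    · rw [segment_symm ℝ (pos n r (.inr q))]
      exact segment_inl_inr_inter_subset hn huv hxy (by rwa [Sym2.eq_swap (a := Sum.inr q)] at hne)
    · rw [segment_symm ℝ (pos n r (.inr p)), pair_comm]
      exact segment_inl_inr_inter_subset hn huv hxy (by rwa [Sym2.eq_swap (a := Sum.inr p)] at hne)
    · rw [segment_symm ℝ (pos n r (.inr p)), segment_symm ℝ (pos n r (.inr q)), pair_comm]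
      exact segment_inl_inr_inter_subset hn huv hxy
        (by rwa [Sym2.eq_swap (a := Sum.inr p), Sym2.eq_swap (a := Sum.inr q)] at hne)

theorem neighborSet_inr (p : Fin (n + 1) × Fin r) :
    (graph n r).neighborSet (.inr p) = {.inl p.1, .inl (p.1 + 1)} := by
  ext (b | p') <;> simp [graph, eq_comm]

theorem neighborSet_inl (b : Fin (n + 1)) :
    (graph n r).neighborSet (.inl b) = Sum.inr '' ({b, b - 1} ×ˢ univ) := by
  ext (b' | ⟨i, j⟩) <;> simp [graph, eq_sub_iff_add_eq, eq_comm]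

theorem ncard_neighborSet_inr (hn : 1 ≤ n) (p : Fin (n + 1) × Fin r) :
    ((graph n r).neighborSet (.inr p)).ncard = 2 := by
  have hne : p.1 ≠ p.1 + 1 := left_ne_add.2 (Fin.one_eq_zero_iff.not.2 (by omega))
  rw [neighborSet_inr, ncard_pair (Sum.inl_injective.ne hne)]

theorem ncard_neighborSet_inl (hn : 1 ≤ n) (b : Fin (n + 1)) :
    ((graph n r).neighborSet (.inl b)).ncard = 2 * r := by
  have hne : b ≠ b - 1 := fun h => Fin.one_eq_zero_iff.not.2 (by omega) (sub_eq_self.1 h.symm)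
  rw [neighborSet_inl, ncard_image_of_injective _ Sum.inr_injective, ncard_prod, ncard_pair hne,
    ncard_univ, Nat.card_eq_fintype_card, Fintype.card_fin]

theorem planarPair (hn : 1 ≤ n) (hr : 1 ≤ r) : PlanarPair 2 ((n + 1) * r) (2 * r) (n + 1) := by
  refine ⟨V n r, inferInstance, graph n r, range Sum.inr, range Sum.inl,
    isCompl_range_inl_range_inr.disjoint.symm, range_inr_union_range_inl, ?_, ?_, ?_, ?_, ?_,
    nonempty_planeEmb hn hr⟩
  · simp [ncard_range_of_injective Sum.inr_injective]
  · simp [ncard_range_of_injective Sum.inl_injective]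
  · rintro (b | p) (b' | p') h
    · exact h.elim
    · exact .inr ⟨mem_range_self _, mem_range_self _⟩
    · exact .inl ⟨mem_range_self _, mem_range_self _⟩
    · exact h.elim
  · rintro _ ⟨p, rfl⟩
    exact ncard_neighborSet_inr hn p
  · rintro _ ⟨b, rfl⟩
    exact ncard_neighborSet_inl hn b

end ThickCycle

theorem planar_two_odd_general (q r : ℕ) (hq3 : 3 ≤ q) (hr : 1 ≤ r) :
    PlanarPair 2 (q * r) (2 * r) q := by
  obtain ⟨n, rfl⟩ : ∃ n, q = n + 1 := ⟨q - 1, by omega⟩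
  exact ThickCycle.planarPair (by omega) hr

theorem planar_two_odd (q r : ℕ) (hq : Odd q) (hq3 : 3 ≤ q) (hr : 1 ≤ r) :
    PlanarPair 2 (q * r) (2 * r) q :=
  planar_two_odd_general q r hq3 hr
end

section
/- For every p ≥ 4 with p ≠ 5, there exists a simple bipartite planar graph in which both parts consist of p vertices, all of degree 3. -/
open Real unitInterval

/-- The radius is `|b - a| / 2`, so that the arc from `b` to `a` is the reverse of the arc from `a`
to `b`. -/
noncomputable def semicircle (up : Bool) (a b : ℝ) (t : I) : ℝ × ℝ :=
  ((a + b) / 2 - (b - a) / 2 * cos (π * t), (if up then 1 else -1) * (|b - a| / 2 * sin (π * t)))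

lemma unitInterval.sin_pi_mul_nonneg (t : I) : 0 ≤ sin (π * t) :=
  sin_nonneg_of_nonneg_of_le_pi (by nlinarith [t.2.1, pi_pos]) (by nlinarith [t.2.2, pi_pos])

lemma interleave_of_sub_mul_sub_eq {a b c d x y : ℝ} (hab : a < b) (hcd : c < d)
    (h₁ : (x - a) * (b - x) = y ^ 2) (h₂ : (x - c) * (d - x) = y ^ 2) (hy : y ≠ 0) :
    a < c ∧ c < b ∧ b < d ∨ c < a ∧ a < d ∧ d < b ∨ a = c ∧ b = d := by
  have hy2 : 0 < y ^ 2 := by positivity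
  have hx₁ : a < x ∧ x < b := ⟨by nlinarith, by nlinarith⟩
  have hx₂ : c < x ∧ x < d := ⟨by nlinarith, by nlinarith⟩
  -- a diameter strictly inside another gives a strictly smaller value of `(x - a) * (b - x)`
  rcases lt_trichotomy a c with hac | rfl | hca
  · rcases lt_or_ge b d with hbd | hdb
    · exact Or.inl ⟨hac, hx₂.1.trans hx₁.2, hbd⟩
    · nlinarith [mul_pos (sub_pos.2 hac) (sub_pos.2 hx₁.2),
        mul_nonneg (sub_pos.2 hx₂.1).le (sub_nonneg.2 hdb)]
  · rcases lt_trichotomy b d with hbd | rfl | hdb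
    · nlinarith [mul_pos (sub_pos.2 hx₁.1) (sub_pos.2 hbd)]
    · exact Or.inr (Or.inr ⟨rfl, rfl⟩)
    · nlinarith [mul_pos (sub_pos.2 hx₁.1) (sub_pos.2 hdb)]
  · rcases lt_or_ge d b with hdb | hbd
    · exact Or.inr (Or.inl ⟨hca, hx₁.1.trans hx₂.2, hdb⟩)
    · nlinarith [mul_pos (sub_pos.2 hca) (sub_pos.2 hx₂.2),
        mul_nonneg (sub_pos.2 hx₁.1).le (sub_nonneg.2 hbd)]

namespace semicircle

variable {up : Bool} {a b : ℝ}

@[simp] lemma apply_zero : semicircle up a b 0 = (a, 0) := by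
  ext <;> simp [semicircle]; ring

@[simp] lemma apply_one : semicircle up a b 1 = (b, 0) := by
  ext <;> simp [semicircle]; ring

lemma apply_symm (t : I) : semicircle up b a (σ t) = semicircle up a b t := by
  simp only [semicircle, coe_symm_eq, mul_sub, mul_one, cos_pi_sub, sin_pi_sub, abs_sub_comm a b]
  ext <;> ring

lemma continuous : Continuous (semicircle up a b) := by
  unfold semicircle; fun_prop

lemma injective (hab : a ≠ b) : Function.Injective (semicircle up a b) := by
  intro t₁ t₂ h
  have hcos : cos (π * t₁) = cos (π * t₂) := by
    have hfst := congrArg Prod.fst h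
    simp only [semicircle] at hfst
    exact mul_left_cancel₀ (by contrapose! hab; linarith) (by linarith : (b - a) / 2 * _ = _)
  have hmem : ∀ t : I, π * t ∈ Set.Icc 0 π := fun t =>
    ⟨by nlinarith [t.2.1, pi_pos], by nlinarith [t.2.2, pi_pos]⟩
  have := injOn_cos (hmem t₁) (hmem t₂) hcos
  exact Subtype.ext (mul_left_cancel₀ pi_ne_zero this)

lemma sub_mul_sub_eq_sq (t : I) :
    ((semicircle up a b t).1 - a) * (b - (semicircle up a b t).1) =
      (semicircle up a b t).2 ^ 2 := by
  have hsign : (if up then (1 : ℝ) else -1) ^ 2 = 1 := by split_ifs <;> norm_num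
  simp only [semicircle, mul_pow, div_pow, sq_abs, hsign, sin_sq]
  ring

lemma snd_nonneg (t : I) : 0 ≤ (semicircle true a b t).2 := by
  simp only [semicircle, if_true, one_mul]
  exact mul_nonneg (by positivity) (sin_pi_mul_nonneg t)

lemma snd_nonpos (t : I) : (semicircle false a b t).2 ≤ 0 := by
  simp only [semicircle, Bool.false_eq_true, if_false, neg_one_mul, neg_nonpos]
  exact mul_nonneg (by positivity) (sin_pi_mul_nonneg t)

lemma eq_zero_or_eq_one_of_snd_eq_zero (hab : a ≠ b) {t : I} (h : (semicircle up a b t).2 = 0) :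
    t = 0 ∨ t = 1 := by
  by_contra! ht
  have h0 : (0 : ℝ) < t := lt_of_le_of_ne t.2.1 (fun h' => ht.1 (Subtype.ext h'.symm))
  have h1 : (t : ℝ) < 1 := lt_of_le_of_ne t.2.2 (fun h' => ht.2 (Subtype.ext h'))
  have hsin : 0 < sin (π * t) := sin_pos_of_pos_of_lt_pi (by positivity) (by nlinarith [pi_pos])
  have hr : 0 < |b - a| / 2 := by simpa [sub_eq_zero] using hab.symm
  have hsign : (if up then (1 : ℝ) else -1) ≠ 0 := by split_ifs <;> norm_num
  simp only [semicircle] at h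
  exact (mul_ne_zero hsign (mul_pos hr hsin).ne') h

lemma eq_of_snd_eq_zero (hab : a ≠ b) {t : I} (h : (semicircle up a b t).2 = 0) :
    semicircle up a b t = (a, 0) ∨ semicircle up a b t = (b, 0) := by
  rcases eq_zero_or_eq_one_of_snd_eq_zero hab h with rfl | rfl <;> simp

lemma page_eq_and_interleave_of_eq {p q : Bool} {c d : ℝ} (hab : a < b) (hcd : c < d)
    {t₁ t₂ : I} (h : semicircle p a b t₁ = semicircle q c d t₂) (hy : (semicircle p a b t₁).2 ≠ 0) :
    p = q ∧ (a < c ∧ c < b ∧ b < d ∨ c < a ∧ a < d ∧ d < b ∨ a = c ∧ b = d) := by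
  set x := (semicircle p a b t₁).1
  set y := (semicircle p a b t₁).2
  refine ⟨?_, ?_⟩
  · cases p <;> cases q
    · rfl
    · exact absurd (le_antisymm (snd_nonpos t₁) (h ▸ snd_nonneg t₂)) hy
    · exact absurd (le_antisymm (h ▸ snd_nonpos t₂) (snd_nonneg t₁)) hy
    · rfl
  · have h₁ : (x - a) * (b - x) = y ^ 2 := sub_mul_sub_eq_sq t₁
    have h₂ : (x - c) * (d - x) = y ^ 2 := by
      simp only [x, y, h]; exact sub_mul_sub_eq_sq t₂
    exact interleave_of_sub_mul_sub_eq hab hcd h₁ h₂ hy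

end semicircle

section TwoPage

variable {V : Type} {G : SimpleGraph V} {x : V → ℝ}

lemma SimpleGraph.Adj.exists_semicircle_eq_of_lt (hx : Function.Injective x)
    (page : Sym2 V → Bool) {u v : V} (h : G.Adj u v) (t : I) :
    ∃ a b t', G.Adj a b ∧ s(a, b) = s(u, v) ∧ x a < x b ∧
      semicircle (page s(u, v)) (x u) (x v) t = semicircle (page s(a, b)) (x a) (x b) t' := by
  rcases lt_or_gt_of_ne (hx.ne h.ne) with hlt | hlt
  · exact ⟨u, v, t, h, rfl, hlt, rfl⟩
  · refine ⟨v, u, σ t, h.symm, Sym2.eq_swap, hlt, ?_⟩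
    rw [Sym2.eq_swap, semicircle.apply_symm]

noncomputable def PlaneEmb.ofTwoPage (hx : Function.Injective x) (page : Sym2 V → Bool)
    (hcross : ∀ ⦃a b c d⦄, G.Adj a b → G.Adj c d → page s(a, b) = page s(c, d) →
      ¬(x a < x c ∧ x c < x b ∧ x b < x d)) : PlaneEmb G where
  pos v := (x v, 0)
  pos_inj u v h := hx (congrArg Prod.fst h)
  arc u v _ := semicircle (page s(u, v)) (x u) (x v)
  arc_cont _ _ _ := semicircle.continuous
  arc_inj _ _ h := semicircle.injective (hx.ne h.ne)
  arc_zero _ _ _ := semicircle.apply_zero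
  arc_one _ _ _ := semicircle.apply_one
  arc_symm u v _ t := by rw [Sym2.eq_swap]; exact semicircle.apply_symm t
  arc_vertex _ _ h _ := fun ⟨_, hw⟩ =>
    semicircle.eq_zero_or_eq_one_of_snd_eq_zero (hx.ne h.ne) (congrArg Prod.snd hw)
  arc_disj u v w z h h' hne t₁ t₂ heq := by
    by_cases hy : (semicircle (page s(u, v)) (x u) (x v) t₁).2 = 0
    · rcases semicircle.eq_of_snd_eq_zero (hx.ne h.ne) hy with hP | hP
      exacts [⟨u, hP⟩, ⟨v, hP⟩]
    · exfalso
      obtain ⟨a, b, t₁', hab, hs₁, hlt₁, hP₁⟩ := h.exists_semicircle_eq_of_lt hx page t₁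
      obtain ⟨c, d, t₂', hcd, hs₂, hlt₂, hP₂⟩ := h'.exists_semicircle_eq_of_lt hx page t₂
      rw [hP₁] at hy heq
      rw [hP₂] at heq
      obtain ⟨hpage, hab_cd | hcd_ab | ⟨hac, hbd⟩⟩ :=
        semicircle.page_eq_and_interleave_of_eq hlt₁ hlt₂ heq hy
      · exact hcross hab hcd hpage hab_cd
      · exact hcross hcd hab hpage.symm hcd_ab
      · exact hne (by rw [← hs₁, ← hs₂, hx hac, hx hbd])

end TwoPage

/-- `IsChord n a b` says that `{a, b}` with `a < b` is one of the chords added to the cycle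
`0, 1, …, n - 1`. For `4 ∣ n` these are the pairs `{i, i + 3}`, `i` even, indices mod `n`, and the
result is the prism `C_{n/2} □ K₂`; for `n ≡ 2 [MOD 4]` the chords `{2, 5}`, `{n - 6, n - 3}`,
`{n - 4, n - 1}` of that pattern are replaced by `{2, n - 3}`, `{5, n - 4}`, `{n - 6, n - 1}`. -/
def IsChord (n a b : ℕ) : Prop :=
  a % 2 = 0 ∧ b = a + 3 ∧ b < n ∧ (n % 4 = 0 ∨ a ≠ 2 ∧ a + 6 ≠ n ∧ a + 4 ≠ n) ∨
  a = 1 ∧ b + 2 = n ∨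
  n % 4 = 2 ∧ a = 2 ∧ b + 3 = n ∨
  n % 4 = 2 ∧ a = 5 ∧ b + 4 = n ∨
  n % 4 = 2 ∧ a + 6 = n ∧ b + 1 = n

namespace IsChord

variable {n a b c d : ℕ}

lemma lt (hn : 8 ≤ n) (h10 : n ≠ 10) (h : IsChord n a b) :
    a + 1 < b ∧ b < n ∧ ¬(a = 0 ∧ b + 1 = n) := by
  unfold IsChord at h; omega

lemma odd_add (hev : Even n) (h : IsChord n a b) : (a + b) % 2 = 1 := by
  have := Nat.even_iff.1 hev
  unfold IsChord at h; omega

lemma eq_of_common_vertex (hn : 8 ≤ n) (hev : Even n) (h₁ : IsChord n a b) (h₂ : IsChord n c d)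
    (h : a = c ∨ a = d ∨ b = c ∨ b = d) : a = c ∧ b = d := by
  have := Nat.even_iff.1 hev
  unfold IsChord at h₁ h₂; omega

lemma not_cross (hev : Even n) (h₁ : IsChord n a b) (h₂ : IsChord n c d)
    (hpage : a % 4 = 0 ↔ c % 4 = 0) : ¬(a < c ∧ c < b ∧ b < d) := by
  have := Nat.even_iff.1 hev
  unfold IsChord at h₁ h₂; omega

lemma exists_of_lt (hn : 8 ≤ n) (hev : Even n) {i : ℕ} (hi : i < n) :
    ∃ j, IsChord n i j ∨ IsChord n j i := by
  have := Nat.even_iff.1 hev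
  obtain h | h | h | h | h | h | h | h | h | h :
      i = 1 ∨ i + 2 = n ∨ n % 4 = 2 ∧ i = 2 ∨ n % 4 = 2 ∧ i + 3 = n ∨ n % 4 = 2 ∧ i = 5 ∨
      n % 4 = 2 ∧ i + 4 = n ∨ n % 4 = 2 ∧ i + 6 = n ∨ n % 4 = 2 ∧ i + 1 = n ∨
      i % 2 = 0 ∧ i + 2 ≠ n ∧ (n % 4 = 0 ∨ i ≠ 2 ∧ i + 6 ≠ n ∧ i + 4 ≠ n) ∨
      i % 2 = 1 ∧ i ≠ 1 ∧ (n % 4 = 0 ∨ i ≠ 5 ∧ i + 1 ≠ n ∧ i + 3 ≠ n) := by omega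
  · exact ⟨n - 2, .inl <| .inr <| .inl ⟨h, by omega⟩⟩
  · exact ⟨1, .inr <| .inr <| .inl ⟨rfl, h⟩⟩
  · exact ⟨n - 3, .inl <| .inr <| .inr <| .inl ⟨h.1, h.2, by omega⟩⟩
  · exact ⟨2, .inr <| .inr <| .inr <| .inl ⟨h.1, rfl, h.2⟩⟩
  · exact ⟨n - 4, .inl <| .inr <| .inr <| .inr <| .inl ⟨h.1, h.2, by omega⟩⟩
  · exact ⟨5, .inr <| .inr <| .inr <| .inr <| .inl ⟨h.1, rfl, h.2⟩⟩
  · exact ⟨n - 1, .inl <| .inr <| .inr <| .inr <| .inr ⟨h.1, h.2, by omega⟩⟩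
  · exact ⟨n - 6, .inr <| .inr <| .inr <| .inr <| .inr ⟨h.1, by omega, h.2⟩⟩
  · exact ⟨i + 3, .inl <| .inl ⟨h.1, rfl, by omega, h.2.2⟩⟩
  · exact ⟨i - 3, .inr <| .inl ⟨by omega, by omega, by omega, by omega⟩⟩

end IsChord

open SimpleGraph

lemma SimpleGraph.cycleGraph_adj_val {n : ℕ} {u v : Fin n} (h : (cycleGraph n).Adj u v) :
    u.val + 1 = v.val ∨ v.val + 1 = u.val ∨ u.val = 0 ∧ v.val + 1 = n ∨
      v.val = 0 ∧ u.val + 1 = n := by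
  rw [cycleGraph_adj'] at h
  have := u.isLt
  rcases lt_trichotomy u v with huv | rfl | hvu
  · rw [Fin.coe_sub_iff_lt.2 huv, Fin.coe_sub_iff_le.2 huv.le] at h
    rw [Fin.lt_def] at huv
    omega
  · simp [Fin.coe_sub_iff_le.2 le_rfl] at h
  · rw [Fin.coe_sub_iff_le.2 hvu.le, Fin.coe_sub_iff_lt.2 hvu] at h
    rw [Fin.lt_def] at hvu
    omega

lemma SimpleGraph.ncard_neighborSet_cycleGraph {n : ℕ} (hn : 3 ≤ n) (v : Fin n) :
    ((cycleGraph n).neighborSet v).ncard = 2 := by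
  obtain ⟨m, rfl⟩ : ∃ m, n = m + 3 := ⟨n - 3, by omega⟩
  rw [← coe_neighborFinset, Set.ncard_coe_finset, card_neighborFinset_eq_degree,
    cycleGraph_degree_three_le]

lemma Fin.ncard_setOf_val_mod_two (p : ℕ) {r : ℕ} (hr : r < 2) :
    {v : Fin (2 * p) | v.val % 2 = r}.ncard = p := by
  have hrange : {v : Fin (2 * p) | v.val % 2 = r} =
      Set.range fun i : Fin p => (⟨2 * i + r, by omega⟩ : Fin (2 * p)) := by
    ext v
    simp only [Set.mem_ofPred_eq, Set.mem_range, Fin.ext_iff]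
    exact ⟨fun h => ⟨⟨v / 2, by omega⟩, show 2 * (v / 2) + r = v by omega⟩,
      fun ⟨i, hi⟩ => by omega⟩
  rw [hrange, Set.ncard_range_of_injective, Nat.card_eq_fintype_card, Fintype.card_fin]
  intro i j h
  simp only [Fin.ext_iff] at h ⊢
  omega

def chordGraph (n : ℕ) : SimpleGraph (Fin n) :=
  fromRel fun u v => IsChord n u v

def chordedCycle (n : ℕ) : SimpleGraph (Fin n) :=
  cycleGraph n ⊔ chordGraph n

def chordPage {n : ℕ} (e : Sym2 (Fin n)) : Bool :=
  e.inf.val % 4 = 0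

section chordedCycle

variable {n : ℕ}

lemma chordPage_mk_of_lt {a b : Fin n} (h : (a : ℕ) < b) :
    chordPage s(a, b) = decide (a.val % 4 = 0) := by
  rw [chordPage, Sym2.inf_mk, inf_of_le_left (Fin.le_def.2 h.le)]

lemma ncard_neighborSet_chordGraph (hn : 8 ≤ n) (hev : Even n) (h10 : n ≠ 10) (v : Fin n) :
    ((chordGraph n).neighborSet v).ncard = 1 := by
  obtain ⟨j, hj⟩ := IsChord.exists_of_lt hn hev v.isLt
  have hjn : j < n := by
    have := v.isLt
    rcases hj with hj | hj <;> have := hj.lt hn h10 <;> omega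
  rw [Set.ncard_eq_one]
  refine ⟨⟨j, hjn⟩, Set.ext fun w => ?_⟩
  simp only [chordGraph, mem_neighborSet, fromRel_adj, Set.mem_singleton_iff, Fin.ext_iff]
  constructor
  · rintro ⟨-, hw | hw⟩ <;> rcases hj with hj | hj <;>
      have := IsChord.eq_of_common_vertex hn hev hj hw (by omega) <;>
      have := (hj.lt hn h10).1 <;> have := (hw.lt hn h10).1 <;> omega
  · intro hw
    rw [hw]
    exact ⟨fun h => by rcases hj with hj | hj <;> have := (hj.lt hn h10).1 <;> omega, hj⟩

lemma disjoint_cycleGraph_chordGraph (hn : 8 ≤ n) (h10 : n ≠ 10) :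
    Disjoint (cycleGraph n) (chordGraph n) := by
  rw [disjoint_left]
  rintro u v huv ⟨-, h | h⟩ <;> have := cycleGraph_adj_val huv <;> have := h.lt hn h10 <;> omega

lemma ncard_neighborSet_chordedCycle (hn : 8 ≤ n) (hev : Even n) (h10 : n ≠ 10) (v : Fin n) :
    ((chordedCycle n).neighborSet v).ncard = 3 := by
  rw [chordedCycle, neighborSet_sup,
    Set.ncard_union_eq (disjoint_neighborSet.2 (disjoint_cycleGraph_chordGraph hn h10) v),
    ncard_neighborSet_cycleGraph (by omega), ncard_neighborSet_chordGraph hn hev h10]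

lemma chordedCycle.odd_add (hev : Even n) {u v : Fin n} (h : (chordedCycle n).Adj u v) :
    ((u : ℕ) + v) % 2 = 1 := by
  have := Nat.even_iff.1 hev
  rcases h with h | ⟨-, h | h⟩
  · have := cycleGraph_adj_val h; omega
  · exact h.odd_add hev
  · have := h.odd_add hev; omega

lemma chordedCycle.not_cross (hn : 8 ≤ n) (hev : Even n) (h10 : n ≠ 10) {a b c d : Fin n}
    (hab : (chordedCycle n).Adj a b) (hcd : (chordedCycle n).Adj c d)
    (hpage : chordPage s(a, b) = chordPage s(c, d)) :
    ¬((a : ℕ) < c ∧ (c : ℕ) < b ∧ (b : ℕ) < d) := by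
  rintro ⟨hac, hcb, hbd⟩
  have := d.isLt
  rcases hab with hab | ⟨-, hab | hab⟩
  · have := cycleGraph_adj_val hab; omega
  rcases hcd with hcd | ⟨-, hcd | hcd⟩
  · have := cycleGraph_adj_val hcd; omega
  · rw [chordPage_mk_of_lt (hac.trans hcb), chordPage_mk_of_lt (hcb.trans hbd),
      decide_eq_decide] at hpage
    exact hab.not_cross hev hcd hpage ⟨hac, hcb, hbd⟩
  · have := (hcd.lt hn h10).1; omega
  · have := (hab.lt hn h10).1; omega

end chordedCycle

theorem planar_three_three (p : ℕ) (hp : 4 ≤ p) (hp5 : p ≠ 5) :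
    PlanarPair 3 p 3 p := by
  have hn : 8 ≤ 2 * p := by omega
  have hev : Even (2 * p) := even_two_mul p
  have h10 : 2 * p ≠ 10 := by omega
  have hx : Function.Injective fun v : Fin (2 * p) => (v : ℝ) :=
    Nat.cast_injective.comp Fin.val_injective
  refine ⟨Fin (2 * p), inferInstance, chordedCycle (2 * p), {v | v.val % 2 = 0},
    {v | v.val % 2 = 1}, ?_, ?_, Fin.ncard_setOf_val_mod_two p (by norm_num),
    Fin.ncard_setOf_val_mod_two p (by norm_num), ?_,
    fun v _ => ncard_neighborSet_chordedCycle hn hev h10 v,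
    fun v _ => ncard_neighborSet_chordedCycle hn hev h10 v,
    ⟨PlaneEmb.ofTwoPage hx chordPage fun a b c d hab hcd hpage h =>
      chordedCycle.not_cross hn hev h10 hab hcd hpage (by exact_mod_cast h)⟩⟩
  · exact Set.disjoint_left.2 fun v h₀ h₁ => by simp_all
  · exact Set.eq_univ_of_forall fun v => by simp only [Set.mem_union, Set.mem_ofPred_eq]; omega
  · intro u v h
    have := chordedCycle.odd_add hev h
    simp only [Set.mem_ofPred_eq]
    omega
end

section
/- For every r ≥ 2, there exists a simple bipartite planar graph in which one part has 4r vertices all of degree 3 and the other part has 3r vertices all of degree 4. -/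
open Function AffineMap

section Orientation

variable {R : Type*} [CommRing R]

def orient (P Q S : R × R) : R :=
  (Q.1 - P.1) * (S.2 - P.2) - (Q.2 - P.2) * (S.1 - P.1)

lemma orient_swap (P Q S : R × R) : orient Q P S = -orient P Q S := by
  unfold orient; ring

@[simp] lemma orient_self_left (P Q : R × R) : orient P Q P = 0 := by
  unfold orient; ring

@[simp] lemma orient_self_right (P Q : R × R) : orient P Q Q = 0 := by
  unfold orient; ring

lemma orient_lineMap (P Q S T : R × R) (t : R) :
    orient P Q (lineMap S T t) = (1 - t) * orient P Q S + t * orient P Q T := by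
  simp only [orient, lineMap_apply_module, Prod.fst_add, Prod.snd_add, Prod.smul_fst,
    Prod.smul_snd, smul_eq_mul]
  ring

@[simp] lemma orient_lineMap_self (P Q : R × R) (t : R) : orient P Q (lineMap P Q t) = 0 := by
  simp [orient_lineMap]

lemma orient_map {S : Type*} [CommRing S] (f : R →+* S) (P Q T : R × R) :
    orient (Prod.map f f P) (Prod.map f f Q) (Prod.map f f T) = f (orient P Q T) := by
  simp [orient]

def SegSeparated [LT R] (P Q S T : R × R) : Prop :=
  0 < orient P Q S * orient P Q T ∨ 0 < orient S T P * orient S T Q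

instance [LT R] [DecidableLT R] (P Q S T : R × R) : Decidable (SegSeparated P Q S T) :=
  inferInstanceAs (Decidable (_ ∨ _))

namespace SegSeparated

variable [LT R] {P Q S T : R × R}

lemma symm (h : SegSeparated P Q S T) : SegSeparated S T P Q := Or.symm h

lemma swap_left (h : SegSeparated P Q S T) : SegSeparated Q P S T := by
  unfold SegSeparated at *
  rwa [orient_swap P Q S, orient_swap P Q T, neg_mul_neg, mul_comm (orient S T Q)]

lemma swap_right (h : SegSeparated P Q S T) : SegSeparated P Q T S :=
  h.symm.swap_left.symm

lemma map {R' : Type*} [CommRing R'] [LT R'] (f : R →+* R') (hf : ∀ x, 0 < x → 0 < f x)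
    (h : SegSeparated P Q S T) :
    SegSeparated (Prod.map f f P) (Prod.map f f Q) (Prod.map f f S) (Prod.map f f T) := by
  unfold SegSeparated at *
  simp only [orient_map, ← map_mul]
  exact h.imp (hf _) (hf _)

end SegSeparated

end Orientation

lemma orient_lineMap_ne_zero {P Q S T : ℝ × ℝ} (h : 0 < orient P Q S * orient P Q T)
    {t : ℝ} (ht : t ∈ unitInterval) : orient P Q (lineMap S T t) ≠ 0 := by
  obtain ⟨ht0, ht1⟩ := ht
  rw [orient_lineMap]
  intro h0
  set a := orient P Q S
  set b := orient P Q T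
  have hsum : (1 - t) * a ^ 2 + t * (a * b) = 0 := by linear_combination a * h0
  have t_eq : t = 0 := by
    nlinarith [mul_nonneg (sub_nonneg.2 ht1) (sq_nonneg a), mul_nonneg ht0 h.le]
  exact left_ne_zero_of_mul h.ne' (by simpa [t_eq] using h0)

lemma lineMap_eq_left_of_eq {P Q X Y : ℝ × ℝ} {s t : ℝ} (heq : lineMap P Q s = lineMap X Y t)
    (hX : orient P Q X = 0) (hY : orient P Q Y ≠ 0) : lineMap X Y t = X := by
  have h0 : t * orient P Q Y = 0 := by
    simpa [hX, orient_lineMap] using congrArg (orient P Q) heq.symm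
  rw [(mul_eq_zero.1 h0).resolve_right hY, lineMap_apply_zero]

namespace PlaneEmb

variable {V W : Type} {G : SimpleGraph V} {H : SimpleGraph W}

def ofSegments (p : V → ℝ × ℝ) (hp : Injective p)
    (hcol : ∀ ⦃u v⦄, G.Adj u v → ∀ w, w ≠ u → w ≠ v → orient (p u) (p v) (p w) ≠ 0)
    (hsep : ∀ ⦃u v x y⦄, G.Adj u v → G.Adj x y → x ≠ u → x ≠ v → y ≠ u → y ≠ v →
      SegSeparated (p u) (p v) (p x) (p y)) :
    PlaneEmb G where
  pos := p
  pos_inj := hp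
  arc u v _ t := lineMap (p u) (p v) (t : ℝ)
  arc_cont _ _ _ := lineMap_continuous.comp continuous_subtype_val
  arc_inj _ _ h := (lineMap_injective ℝ (hp.ne h.ne)).comp Subtype.val_injective
  arc_zero _ _ _ := lineMap_apply_zero _ _
  arc_one _ _ _ := lineMap_apply_one _ _
  arc_symm _ _ _ t := lineMap_apply_one_sub _ _ _
  arc_vertex u v h t := by
    rintro ⟨w, hw⟩
    by_cases hwu : w = u
    · exact Or.inl (Subtype.ext (lineMap_injective ℝ (hp.ne h.ne) (by simpa [hwu] using hw)))
    by_cases hwv : w = v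
    · exact Or.inr (Subtype.ext (lineMap_injective ℝ (hp.ne h.ne) (by simpa [hwv] using hw)))
    exact absurd (by rw [← hw]; exact orient_lineMap_self _ _ _) (hcol h w hwu hwv)
  arc_disj u v x y h h' hne t₁ t₂ heq := by
    by_cases hx : x = u ∨ x = v
    · have hy : y ≠ u ∧ y ≠ v := by
        refine ⟨fun hyu => hne ?_, fun hyv => hne ?_⟩ <;> rcases hx with rfl | rfl <;>
          simp_all [Sym2.eq_swap]
      refine ⟨x, heq.trans (lineMap_eq_left_of_eq heq ?_ (hcol h y hy.1 hy.2))⟩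
      rcases hx with rfl | rfl <;> simp
    by_cases hy : y = u ∨ y = v
    · have heq' : lineMap (p u) (p v) (t₁ : ℝ) = lineMap (p y) (p x) (1 - (t₂ : ℝ)) := by
        rw [lineMap_apply_one_sub]; exact heq
      refine ⟨y, heq'.trans (lineMap_eq_left_of_eq heq' ?_ (hcol h x (by tauto) (by tauto)))⟩
      rcases hy with rfl | rfl <;> simp
    rw [not_or] at hx hy
    exfalso
    rcases hsep h h' hx.1 hx.2 hy.1 hy.2 with hs | hs
    · exact orient_lineMap_ne_zero hs t₂.2 (by rw [← heq]; exact orient_lineMap_self _ _ _)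
    · exact orient_lineMap_ne_zero hs t₁.2 (by rw [heq]; exact orient_lineMap_self _ _ _)

def support (E : PlaneEmb G) : Set (ℝ × ℝ) :=
  Set.range E.pos ∪ ⋃ e : {e : V × V // G.Adj e.1 e.2}, Set.range (E.arc e.2)

lemma pos_mem_support (E : PlaneEmb G) (v : V) : E.pos v ∈ E.support :=
  Or.inl ⟨v, rfl⟩

lemma arc_mem_support (E : PlaneEmb G) {u v : V} (h : G.Adj u v) (t : unitInterval) :
    E.arc h t ∈ E.support :=
  Or.inr (Set.mem_iUnion.2 ⟨⟨(u, v), h⟩, t, rfl⟩)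

lemma isCompact_support [Finite V] (E : PlaneEmb G) : IsCompact E.support :=
  (Set.finite_range E.pos).isCompact.union <|
    isCompact_iUnion fun e => isCompact_range (E.arc_cont e.2)

def map (E : PlaneEmb G) (f : ℝ × ℝ → ℝ × ℝ) (hf : Continuous f) (hinj : Injective f) :
    PlaneEmb G where
  pos := f ∘ E.pos
  pos_inj := hinj.comp E.pos_inj
  arc _ _ h := f ∘ E.arc h
  arc_cont _ _ h := hf.comp (E.arc_cont h)
  arc_inj _ _ h := hinj.comp (E.arc_inj h)
  arc_zero _ _ h := congrArg f (E.arc_zero h)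
  arc_one _ _ h := congrArg f (E.arc_one h)
  arc_symm _ _ h t := congrArg f (E.arc_symm h t)
  arc_vertex _ _ h t := fun ⟨w, hw⟩ => E.arc_vertex h t ⟨w, hinj hw⟩
  arc_disj _ _ _ _ h h' hne t₁ t₂ heq :=
    (E.arc_disj h h' hne t₁ t₂ (hinj heq)).imp fun _ hw => congrArg f hw

lemma support_map (E : PlaneEmb G) (f : ℝ × ℝ → ℝ × ℝ) (hf : Continuous f) (hinj : Injective f) :
    (E.map f hf hinj).support = f '' E.support := by
  simp only [support, map, Set.image_union, Set.image_iUnion, Set.range_comp]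

def sum (E₁ : PlaneEmb G) (E₂ : PlaneEmb H) (hd : Disjoint E₁.support E₂.support) :
    PlaneEmb (G ⊕g H) where
  pos := Sum.elim E₁.pos E₂.pos
  pos_inj := by
    rintro (u | u) (v | v) h
    · exact congrArg Sum.inl (E₁.pos_inj h)
    · exact (hd.ne_of_mem (E₁.pos_mem_support u) (E₂.pos_mem_support v) h).elim
    · exact (hd.ne_of_mem (E₁.pos_mem_support v) (E₂.pos_mem_support u) h.symm).elim
    · exact congrArg Sum.inr (E₂.pos_inj h)
  arc
    | .inl _, .inl _, h => E₁.arc h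
    | .inr _, .inr _, h => E₂.arc h
  arc_cont := by
    -- adjacency across the summands is `false = true`, which `cases` refutes
    rintro (u | u) (v | v) h <;> try cases h
    exacts [E₁.arc_cont h, E₂.arc_cont h]
  arc_inj := by
    rintro (u | u) (v | v) h <;> try cases h
    exacts [E₁.arc_inj h, E₂.arc_inj h]
  arc_zero := by
    rintro (u | u) (v | v) h <;> try cases h
    exacts [E₁.arc_zero h, E₂.arc_zero h]
  arc_one := by
    rintro (u | u) (v | v) h <;> try cases h
    exacts [E₁.arc_one h, E₂.arc_one h]
  arc_symm := by
    rintro (u | u) (v | v) h <;> try cases h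
    exacts [E₁.arc_symm h, E₂.arc_symm h]
  arc_vertex := by
    rintro (u | u) (v | v) h t ⟨w | w, hw⟩ <;> try cases h
    · exact E₁.arc_vertex h t ⟨w, hw⟩
    · exact (hd.ne_of_mem (E₁.arc_mem_support h t) (E₂.pos_mem_support w) hw).elim
    · exact (hd.ne_of_mem (E₁.pos_mem_support w) (E₂.arc_mem_support h t) hw.symm).elim
    · exact E₂.arc_vertex h t ⟨w, hw⟩
  arc_disj := by
    rintro (u | u) (v | v) (x | x) (y | y) h h' hne t₁ t₂ heq <;> (try cases h) <;>
      (try cases h')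
    · obtain ⟨w, hw⟩ := E₁.arc_disj h h' (by simpa using hne) t₁ t₂ heq
      exact ⟨.inl w, hw⟩
    · exact (hd.ne_of_mem (E₁.arc_mem_support h t₁) (E₂.arc_mem_support h' t₂) heq).elim
    · exact (hd.ne_of_mem (E₁.arc_mem_support h' t₂) (E₂.arc_mem_support h t₁) heq.symm).elim
    · obtain ⟨w, hw⟩ := E₂.arc_disj h h' (by simpa using hne) t₁ t₂ heq
      exact ⟨.inr w, hw⟩

lemma exists_disjoint_translate [Finite V] [Finite W] (E₁ : PlaneEmb G) (E₂ : PlaneEmb H) :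
    ∃ c : ℝ × ℝ, Disjoint E₁.support ((· + c) '' E₂.support) := by
  obtain ⟨C, hC⟩ := isBounded_iff_forall_norm_le.1
    (E₁.isCompact_support.union E₂.isCompact_support).isBounded
  obtain ⟨c, hc⟩ := NormedSpace.exists_lt_norm ℝ (ℝ × ℝ) (2 * C)
  refine ⟨c, Set.disjoint_left.2 ?_⟩
  rintro _ hz ⟨z, hz', rfl⟩
  have : ‖c‖ ≤ ‖z + c‖ + ‖z‖ := by simpa using norm_sub_le (z + c) z
  linarith [hC _ (Or.inl hz), hC _ (Or.inr hz')]

end PlaneEmb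

section SumImage

variable {V W : Type*} (s : Set V) (t : Set W)

@[simp] lemma Set.inl_mem_inl_image_union_inr_image (v : V) :
    Sum.inl v ∈ Sum.inl '' s ∪ Sum.inr '' t ↔ v ∈ s := by
  simp

@[simp] lemma Set.inr_mem_inl_image_union_inr_image (w : W) :
    Sum.inr w ∈ Sum.inl '' s ∪ Sum.inr '' t ↔ w ∈ t := by
  simp

lemma Set.ncard_inl_image_union_inr_image [Finite V] [Finite W] :
    (Sum.inl '' s ∪ Sum.inr '' t).ncard = s.ncard + t.ncard := by
  rw [Set.ncard_union_eq (by simp [Set.disjoint_left]),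
    Set.ncard_image_of_injective _ Sum.inl_injective,
    Set.ncard_image_of_injective _ Sum.inr_injective]

end SumImage

open SimpleGraph Set in
theorem PlanarPair.add {a b p q p' q' : ℕ} (h₁ : PlanarPair a p b q)
    (h₂ : PlanarPair a p' b q') : PlanarPair a (p + p') b (q + q') := by
  obtain ⟨V, _, G, A, B, hAB, hcov, hp, hq, hbip, ha, hb, ⟨E₁⟩⟩ := h₁
  obtain ⟨W, _, H, A', B', hAB', hcov', hp', hq', hbip', ha', hb', ⟨E₂⟩⟩ := h₂
  obtain ⟨c, hc⟩ := E₁.exists_disjoint_translate E₂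
  let E₂' := E₂.map (· + c) (continuous_add_const c) (add_left_injective c)
  have hE : Disjoint E₁.support E₂'.support := by rwa [PlaneEmb.support_map]
  refine ⟨V ⊕ W, inferInstance, G ⊕g H, Sum.inl '' A ∪ Sum.inr '' A',
    Sum.inl '' B ∪ Sum.inr '' B', disjoint_left.2 ?_, eq_univ_of_forall ?_,
    by rw [ncard_inl_image_union_inr_image, hp, hp'],
    by rw [ncard_inl_image_union_inr_image, hq, hq'], ?_, ?_, ?_, ⟨E₁.sum E₂' hE⟩⟩
  · rintro (v | v) <;>
      simp only [inl_mem_inl_image_union_inr_image, inr_mem_inl_image_union_inr_image]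
    exacts [fun h => disjoint_left.1 hAB h, fun h => disjoint_left.1 hAB' h]
  · rintro (v | v)
    · rw [mem_union, inl_mem_inl_image_union_inr_image, inl_mem_inl_image_union_inr_image]
      exact eq_univ_iff_forall.1 hcov v
    · rw [mem_union, inr_mem_inl_image_union_inr_image, inr_mem_inl_image_union_inr_image]
      exact eq_univ_iff_forall.1 hcov' v
  · rintro (u | u) (v | v) h <;> (try cases h)
    · simpa using hbip h
    · simpa using hbip' h
  · rintro (v | v) hv <;>
      simp only [inl_mem_inl_image_union_inr_image, inr_mem_inl_image_union_inr_image] at hv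
    · rw [neighborSet_sum_inl, ncard_image_of_injective _ Sum.inl_injective, ha v hv]
    · rw [neighborSet_sum_inr, ncard_image_of_injective _ Sum.inr_injective, ha' v hv]
  · rintro (v | v) hv <;>
      simp only [inl_mem_inl_image_union_inr_image, inr_mem_inl_image_union_inr_image] at hv
    · rw [neighborSet_sum_inl, ncard_image_of_injective _ Sum.inl_injective, hb v hv]
    · rw [neighborSet_sum_inr, ncard_image_of_injective _ Sum.inr_injective, hb' v hv]

open Finset in
theorem planarPair_of_coloring {V : Type} [Fintype V] {G : SimpleGraph V} [DecidableRel G.Adj]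
    {a p b q : ℕ} (c : V → Bool) (hc : ∀ ⦃u v⦄, G.Adj u v → c u ≠ c v)
    (hp : #{v | c v = true} = p) (hq : #{v | c v = false} = q)
    (ha : ∀ v, c v = true → G.degree v = a) (hb : ∀ v, c v = false → G.degree v = b)
    (E : PlaneEmb G) : PlanarPair a p b q := by
  have hdeg (v : V) : (G.neighborSet v).ncard = G.degree v := by
    rw [Set.ncard_eq_toFinset_card', ← SimpleGraph.neighborFinset_def,
      SimpleGraph.card_neighborFinset_eq_degree]
  refine ⟨V, inferInstance, G, {v | c v = true}, {v | c v = false}, ?_, ?_, ?_, ?_, ?_,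
    fun v hv => (hdeg v).trans (ha v hv), fun v hv => (hdeg v).trans (hb v hv), ⟨E⟩⟩
  · exact Set.disjoint_left.2 fun v hv hv' => by simp_all
  · ext v; cases c v <;> simp_all
  · rw [Set.ncard_eq_toFinset_card', Set.toFinset_ofPred, hp]
  · rw [Set.ncard_eq_toFinset_card', Set.toFinset_ofPred, hq]
  · intro u v h
    have := hc h
    cases hu : c u <;> cases hv : c v <;> simp_all

def SimpleGraph.ofEdgeList {V : Type*} (E : List (V × V)) : SimpleGraph V :=
  SimpleGraph.fromRel fun u v => (u, v) ∈ E

instance {V : Type*} [DecidableEq V] (E : List (V × V)) :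
    DecidableRel (SimpleGraph.ofEdgeList E).Adj :=
  inferInstanceAs (DecidableRel (SimpleGraph.fromRel _).Adj)

open Finset in
theorem planarPair_of_integer_drawing {n a p b q : ℕ} (E : List (Fin n × Fin n))
    (z : Fin n → ℤ × ℤ) (c : Fin n → Bool) (hz : Injective z)
    (hcol : ∀ e ∈ E, ∀ w, w ≠ e.1 → w ≠ e.2 → orient (z e.1) (z e.2) (z w) ≠ 0)
    (hsep : ∀ e ∈ E, ∀ f ∈ E, f.1 ≠ e.1 → f.1 ≠ e.2 → f.2 ≠ e.1 → f.2 ≠ e.2 →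
      SegSeparated (z e.1) (z e.2) (z f.1) (z f.2))
    (hc : ∀ e ∈ E, c e.1 ≠ c e.2)
    (hp : #{v | c v = true} = p) (hq : #{v | c v = false} = q)
    (ha : ∀ v : Fin n, c v = true → (SimpleGraph.ofEdgeList E).degree v = a)
    (hb : ∀ v : Fin n, c v = false → (SimpleGraph.ofEdgeList E).degree v = b) :
    PlanarPair a p b q := by
  set ι : ℤ × ℤ → ℝ × ℝ := Prod.map (Int.castRingHom ℝ) (Int.castRingHom ℝ)
  have hι : Injective ι := Int.cast_injective.prodMap Int.cast_injective
  refine planarPair_of_coloring c ?_ hp hq ha hb (PlaneEmb.ofSegments (ι ∘ z) (hι.comp hz) ?_ ?_)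
  · rintro u v ⟨-, h | h⟩
    exacts [hc _ h, (hc _ h).symm]
  · rintro u v ⟨-, h | h⟩ w hwu hwv <;> simp only [comp_apply, ι, orient_map, ne_eq,
      map_eq_zero_iff _ (RingHom.injective_int _)]
    · exact hcol _ h w hwu hwv
    · rw [orient_swap, neg_eq_zero]; exact hcol _ h w hwv hwu
  · have hpos (x : ℤ) (hx : 0 < x) : 0 < Int.castRingHom ℝ x := Int.cast_pos.2 hx
    rintro u v x y ⟨-, e | e⟩ ⟨-, f | f⟩ hxu hxv hyu hyv
    · exact (hsep _ e _ f hxu hxv hyu hyv).map _ hpos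
    · exact (hsep _ e _ f hyu hyv hxu hxv).swap_right.map _ hpos
    · exact (hsep _ e _ f hxv hxu hyv hyu).swap_left.map _ hpos
    · exact (hsep _ e _ f hyv hyu hxv hxu).swap_left.swap_right.map _ hpos

/- Integer drawings of the paper's graph for `r = 2, 3`, made of `r` rotated copies of a
seven-vertex gadget: vertex `7 * i + j` is vertex `j` of copy `i`, and those with `j < 4` form
the part of degree `3`. -/

def gadget2Pos : Fin 14 → ℤ × ℤ :=
  ![(2055, 2242), (-287, 1940), (-1961, 308), (660, 709), (-2124, 2137), (1195, 1605), (-716, 756),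
   (-2062, -2124), (430, -2032), (2050, -243), (-750, -715), (2247, -2032), (-1239, -1487),
   (714, -726)]

def gadget2Edges : List (Fin 14 × Fin 14) :=
  [(0, 4), (4, 7), (3, 6), (6, 10), (0, 5), (3, 5), (5, 1), (5, 9), (4, 1), (4, 2), (6, 1), (6, 2),
   (7, 11), (11, 0), (10, 13), (13, 3), (7, 12), (10, 12), (12, 8), (12, 2), (11, 8), (11, 9),
   (13, 8), (13, 9)]

def gadget3Pos : Fin 21 → ℤ × ℤ :=
  ![(2589, 1596), (810, 1787), (-809, 1812), (827, 504), (6, 3013), (1628, 1164), (19, 1041),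
   (-2578, 1455), (-2057, -288), (-1170, -1701), (-890, 533), (-2572, -1602), (-1732, 865),
   (-884, -504), (106, -3073), (1207, -1668), (2033, -255), (4, -922), (2611, -1444), (182, -2019),
   (844, -535)]

def gadget3Edges : List (Fin 21 × Fin 21) :=
  [(0, 4), (4, 7), (3, 6), (6, 10), (0, 5), (3, 5), (5, 1), (5, 16), (4, 1), (4, 2), (6, 1),
   (6, 2), (7, 11), (11, 14), (10, 13), (13, 17), (7, 12), (10, 12), (12, 8), (12, 2), (11, 8),
   (11, 9), (13, 8), (13, 9), (14, 18), (18, 0), (17, 20), (20, 3), (14, 19), (17, 19), (19, 15),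
   (19, 9), (18, 15), (18, 16), (20, 15), (20, 16)]

set_option maxRecDepth 100000 in
theorem planarPair_gadget2 : PlanarPair 3 8 4 6 :=
  planarPair_of_integer_drawing gadget2Edges gadget2Pos (fun v => v.1 % 7 < 4)
    (by decide) (by decide) (by decide) (by decide) (by decide) (by decide) (by decide) (by decide)

set_option maxRecDepth 100000 in
theorem planarPair_gadget3 : PlanarPair 3 12 4 9 :=
  planarPair_of_integer_drawing gadget3Edges gadget3Pos (fun v => v.1 % 7 < 4)
    (by decide) (by decide) (by decide) (by decide) (by decide) (by decide) (by decide) (by decide)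

theorem planar_three_four (r : ℕ) (hr : 2 ≤ r) :
    PlanarPair 3 (4 * r) 4 (3 * r) := by
  induction r using Nat.strong_induction_on with
  | _ r ih =>
    obtain rfl | rfl | hr4 : r = 2 ∨ r = 3 ∨ 4 ≤ r := by omega
    · exact planarPair_gadget2
    · exact planarPair_gadget3
    · convert (ih (r - 2) (by omega) (by omega)).add planarPair_gadget2 using 2 <;> omega
end
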